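/- arXiv:1906.10933 — 2 statements merged into one kernel-verified Lean document; each statement's English description precedes it below -/
import Mathlib

section
/- Let X = X_1×…×X_d be an admissible space of d-dimensional random vectors such that, for every i ∈ {1,…,d}, the Köthe dual X'_i coincides with the norm dual of the Banach lattice X_i, and let E be an admissible space of random variables with Köthe dual E'. If a map S : X → E is monotone (X ≥ Y almost surely componentwise implies S(X) ≥ S(Y) almost surely) and concave, then for every W ∈ E'_+ the functional X ↦ E[S(X)W] is upper semicontinuous with respect to the weak topology σ(X,X'). -/
open MeasureTheory Filter Set
open scoped ENNReal

noncomputable section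

namespace SystemicRisk

variable {Ω : Type*} [MeasurableSpace Ω]

/-- A random variable is essentially bounded. -/
def EssBdd {μ : Measure Ω} (f : Ω →ₘ[μ] ℝ) : Prop :=
  ∃ C : ℝ, ∀ᵐ ω ∂μ, |f ω| ≤ C

/-- The scalar pairing `E[U W]`. -/
def ip {μ : Measure Ω} (U W : Ω →ₘ[μ] ℝ) : ℝ := ∫ ω, U ω * W ω ∂μ

/-- The Köthe dual of a set of random variables. -/
def kdual {μ : Measure Ω} (L : Set (Ω →ₘ[μ] ℝ)) : Set (Ω →ₘ[μ] ℝ) :=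
  {Z | ∀ f ∈ L, Integrable (fun ω => f ω * Z ω) μ}

/-- `nrm` is a Banach lattice norm on `L` (w.r.t. the a.s. order). -/
structure IsBLNorm {μ : Measure Ω} (L : Set (Ω →ₘ[μ] ℝ)) (nrm : (Ω →ₘ[μ] ℝ) → ℝ) : Prop where
  nonneg : ∀ f ∈ L, 0 ≤ nrm f
  eq_zero_iff : ∀ f ∈ L, (nrm f = 0 ↔ f = 0)
  smul_eq : ∀ f ∈ L, ∀ c : ℝ, nrm (c • f) = |c| * nrm f
  triangle : ∀ f ∈ L, ∀ g ∈ L, nrm (f + g) ≤ nrm f + nrm g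
  solid : ∀ f ∈ L, ∀ g ∈ L, |f| ≤ |g| → nrm f ≤ nrm g
  complete : ∀ u : ℕ → (Ω →ₘ[μ] ℝ), (∀ n, u n ∈ L) →
      (∀ ε : ℝ, 0 < ε → ∃ N : ℕ, ∀ m ≥ N, ∀ n ≥ N, nrm (u m - u n) < ε) →
      ∃ f ∈ L, ∀ ε : ℝ, 0 < ε → ∃ N : ℕ, ∀ n ≥ N, nrm (u n - f) < ε

/-- `L` is an admissible space: a linear subspace of `L^0` which is a Banach lattice
(for the a.s. order, with norm `nrm`) satisfying `L^∞ ⊆ L ⊆ L^1`. -/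
structure IsAdmissible {μ : Measure Ω} (L : Set (Ω →ₘ[μ] ℝ)) (nrm : (Ω →ₘ[μ] ℝ) → ℝ) : Prop where
  zero_mem : (0 : Ω →ₘ[μ] ℝ) ∈ L
  add_mem : ∀ f ∈ L, ∀ g ∈ L, f + g ∈ L
  smul_mem : ∀ (c : ℝ), ∀ f ∈ L, c • f ∈ L
  sup_mem : ∀ f ∈ L, ∀ g ∈ L, f ⊔ g ∈ L
  inf_mem : ∀ f ∈ L, ∀ g ∈ L, f ⊓ g ∈ L
  linfty_subset : ∀ f, EssBdd f → f ∈ L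
  subset_lone : ∀ f ∈ L, Integrable f μ
  banach : IsBLNorm L nrm

variable {d : ℕ}

/-- The product space `X = X_1 × ⋯ × X_d`. -/
def prodSet {μ : Measure Ω} (Li : Fin d → Set (Ω →ₘ[μ] ℝ)) : Set (Fin d → (Ω →ₘ[μ] ℝ)) :=
  {X | ∀ i, X i ∈ Li i}

/-- The vector pairing `E[⟨X,Z⟩] = ∑ i, E[X_i Z_i]`. -/
def pairing {μ : Measure Ω} (X Z : Fin d → (Ω →ₘ[μ] ℝ)) : ℝ := ∑ i, ip (X i) (Z i)

/-- The constant random vector associated with `m ∈ ℝ^d`. -/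
def cvec (μ : Measure Ω) (m : Fin d → ℝ) : Fin d → (Ω →ₘ[μ] ℝ) :=
  fun i => (AEEqFun.const Ω (m i) : Ω →ₘ[μ] ℝ)

/-- The weak topology `σ(P, D)` on a set of random vectors `P` induced by the pairing
with elements of `D`. -/
def wtop {μ : Measure Ω} (P D : Set (Fin d → (Ω →ₘ[μ] ℝ))) : TopologicalSpace ↥P :=
  TopologicalSpace.induced
    (fun X : ↥P => fun Z : ↥D => pairing (X : Fin d → (Ω →ₘ[μ] ℝ)) (Z : Fin d → (Ω →ₘ[μ] ℝ)))
    Pi.topologicalSpace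

/-- The weak topology `σ(P, D)` on a set of random variables `P` induced by the pairing
with elements of `D`. -/
def wtop1 {μ : Measure Ω} (P D : Set (Ω →ₘ[μ] ℝ)) : TopologicalSpace ↥P :=
  TopologicalSpace.induced
    (fun U : ↥P => fun W : ↥D => ip (U : Ω →ₘ[μ] ℝ) (W : Ω →ₘ[μ] ℝ))
    Pi.topologicalSpace

/-- An admissible impact map `S : X → E`. -/
structure IsAdmissibleImpact {μ : Measure Ω} (XX XX' : Set (Fin d → (Ω →ₘ[μ] ℝ)))
    (EE EE' : Set (Ω →ₘ[μ] ℝ)) (S : (Fin d → (Ω →ₘ[μ] ℝ)) → (Ω →ₘ[μ] ℝ)) : Prop where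
  mapsTo : ∀ X ∈ XX, S X ∈ EE
  nonconst : ∃ X ∈ XX, ∃ Y ∈ XX, S X ≠ S Y
  normalized : S 0 = 0
  mono : ∀ X ∈ XX, ∀ Y ∈ XX, X ≤ Y → S X ≤ S Y
  concave : ∀ X ∈ XX, ∀ Y ∈ XX, ∀ t : ℝ, 0 ≤ t → t ≤ 1 →
      t • S X + (1 - t) • S Y ≤ S (t • X + (1 - t) • Y)
  usc : ∀ W ∈ EE', (0 : Ω →ₘ[μ] ℝ) ≤ W →
      @UpperSemicontinuous (↥XX) ℝ (wtop XX XX') _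
        (fun X : ↥XX => ∫ ω, S (X : Fin d → (Ω →ₘ[μ] ℝ)) ω * W ω ∂μ)

/-- An admissible acceptance set `A ⊆ E` (relative to the impact map `S`). -/
structure IsAdmissibleAcceptance {μ : Measure Ω} (XX : Set (Fin d → (Ω →ₘ[μ] ℝ)))
    (EE EE' : Set (Ω →ₘ[μ] ℝ)) (S : (Fin d → (Ω →ₘ[μ] ℝ)) → (Ω →ₘ[μ] ℝ))
    (A : Set (Ω →ₘ[μ] ℝ)) : Prop where
  subset : A ⊆ EE
  preimage_nonempty : ∃ X ∈ XX, S X ∈ A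
  preimage_proper : ∃ X ∈ XX, S X ∉ A
  zero_mem : (0 : Ω →ₘ[μ] ℝ) ∈ A
  mono : ∀ U ∈ A, ∀ V ∈ EE, (0 : Ω →ₘ[μ] ℝ) ≤ V → U + V ∈ A
  convex : ∀ U ∈ A, ∀ V ∈ A, ∀ t : ℝ, 0 ≤ t → t ≤ 1 → t • U + (1 - t) • V ∈ A
  closed : @IsClosed (↥EE) (wtop1 EE EE') {U : ↥EE | (U : Ω →ₘ[μ] ℝ) ∈ A}

/-- The systemic acceptance set `S⁻¹(A) = {X ∈ X : S(X) ∈ A}`. -/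
def sysAcc {μ : Measure Ω} (XX : Set (Fin d → (Ω →ₘ[μ] ℝ)))
    (S : (Fin d → (Ω →ₘ[μ] ℝ)) → (Ω →ₘ[μ] ℝ)) (A : Set (Ω →ₘ[μ] ℝ)) :
    Set (Fin d → (Ω →ₘ[μ] ℝ)) :=
  {X ∈ XX | S X ∈ A}

/-- The "first allocate, then aggregate" systemic risk measure `ρ`. -/
def rho (μ : Measure Ω) (S : (Fin d → (Ω →ₘ[μ] ℝ)) → (Ω →ₘ[μ] ℝ)) (A : Set (Ω →ₘ[μ] ℝ))
    (X : Fin d → (Ω →ₘ[μ] ℝ)) : EReal :=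
  ⨅ m ∈ {m : Fin d → ℝ | S (X + cvec μ m) ∈ A}, ((∑ i, m i : ℝ) : EReal)

/-- The (lower) support function of a set of random vectors. -/
def suppV {μ : Measure Ω} (B : Set (Fin d → (Ω →ₘ[μ] ℝ))) (Z : Fin d → (Ω →ₘ[μ] ℝ)) : EReal :=
  ⨅ X ∈ B, ((pairing X Z : ℝ) : EReal)

/-- The barrier cone of a set of random vectors, inside the dual set `D`. -/
def barrV {μ : Measure Ω} (B D : Set (Fin d → (Ω →ₘ[μ] ℝ))) : Set (Fin d → (Ω →ₘ[μ] ℝ)) :=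
  {Z ∈ D | ⊥ < suppV B Z}

/-- The (lower) support function of a set of random variables. -/
def suppS {μ : Measure Ω} (A : Set (Ω →ₘ[μ] ℝ)) (W : Ω →ₘ[μ] ℝ) : EReal :=
  ⨅ U ∈ A, ((ip U W : ℝ) : EReal)

/-- The barrier cone of a set of random variables, inside the dual set `D`. -/
def barrS {μ : Measure Ω} (A D : Set (Ω →ₘ[μ] ℝ)) : Set (Ω →ₘ[μ] ℝ) :=
  {W ∈ D | ⊥ < suppS A W}

/-- The generic penalty function with dual variables `W` ranging over `K`. -/
def penalty {μ : Measure Ω} (XX : Set (Fin d → (Ω →ₘ[μ] ℝ)))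
    (A : Set (Ω →ₘ[μ] ℝ)) (S : (Fin d → (Ω →ₘ[μ] ℝ)) → (Ω →ₘ[μ] ℝ))
    (K : Set (Ω →ₘ[μ] ℝ)) (Z : Fin d → (Ω →ₘ[μ] ℝ)) : EReal :=
  ⨆ W ∈ K, (suppS A W +
    ⨅ X ∈ XX, ((pairing X Z - ∫ ω, S X ω * W ω ∂μ : ℝ) : EReal))

/-- a.s. strictly positive random variables. -/
def strictPos (μ : Measure Ω) : Set (Ω →ₘ[μ] ℝ) := {W | ∀ᵐ ω ∂μ, 0 < W ω}

/-- The penalty function `α`. -/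
def alpha {μ : Measure Ω} (XX : Set (Fin d → (Ω →ₘ[μ] ℝ))) (EE' : Set (Ω →ₘ[μ] ℝ))
    (A : Set (Ω →ₘ[μ] ℝ)) (S : (Fin d → (Ω →ₘ[μ] ℝ)) → (Ω →ₘ[μ] ℝ)) :
    (Fin d → (Ω →ₘ[μ] ℝ)) → EReal :=
  penalty XX A S (barrS A EE')

/-- The penalty function `α⁺`. -/
def alphaPlus {μ : Measure Ω} (XX : Set (Fin d → (Ω →ₘ[μ] ℝ))) (EE' : Set (Ω →ₘ[μ] ℝ))
    (A : Set (Ω →ₘ[μ] ℝ)) (S : (Fin d → (Ω →ₘ[μ] ℝ)) → (Ω →ₘ[μ] ℝ)) :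
    (Fin d → (Ω →ₘ[μ] ℝ)) → EReal :=
  penalty XX A S (barrS A EE' ∩ (strictPos μ ∪ {0}))

/-- a.s. strictly positive random vectors. -/
def strictPosV (μ : Measure Ω) (d : ℕ) : Set (Fin d → (Ω →ₘ[μ] ℝ)) :=
  {Z | ∀ i, ∀ᵐ ω ∂μ, 0 < Z i ω}

/-- The set `C` of nonnegative dual vectors with all components of expectation one. -/
def Cset {μ : Measure Ω} (XX' : Set (Fin d → (Ω →ₘ[μ] ℝ))) : Set (Fin d → (Ω →ₘ[μ] ℝ)) :=
  {Z ∈ XX' | (∀ i, (0 : Ω →ₘ[μ] ℝ) ≤ Z i) ∧ ∀ i, (∫ ω, Z i ω ∂μ) = 1}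

/-- A map with values in `[−∞,∞]` is proper on `P` if it never attains `−∞` on `P`
and is finite somewhere on `P`. -/
def ProperOn {β : Type*} (P : Set β) (f : β → EReal) : Prop :=
  (∀ x ∈ P, f x ≠ ⊥) ∧ ∃ x ∈ P, f x ≠ ⊤

/-- The positive part of an extended real number, as an extended nonnegative real. -/
def epos (x : EReal) : ℝ≥0∞ := if x = ⊤ then ⊤ else ENNReal.ofReal x.toReal

/-- The integral of an extended-real-valued function. -/
def eintegral (μ : Measure Ω) (g : Ω → EReal) : EReal :=
  ((∫⁻ ω, epos (g ω) ∂μ : ℝ≥0∞) : EReal) - ((∫⁻ ω, epos (-(g ω)) ∂μ : ℝ≥0∞) : EReal)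

/-
Write `F X = E[S(X) W]`. As `W ≥ 0`, `F` is monotone and concave on `X`. A monotone function
on a Banach lattice is bounded below on a norm ball around each `X₀`: otherwise there are
`Hₙ` with `‖Hₙ‖ ≤ 2⁻ⁿ` and `F (X₀ + Hₙ) < F X₀ - n`, while every `X₀ + Hₙ` lies above
`X₀ - ∑ₙ |Hₙ|`. Hahn–Banach, applied to the one-sided directional derivative of `F` at `X₀`,
gives a linear supergradient `ℓ`; the lower bound on the ball makes `ℓ` norm-continuous, so
`ℓ = (· | Z)` for some `Z ∈ X'`. Hence `F ≤ F X₀ + (· - X₀ | Z)`, a `σ(X,X')`-continuous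
majorant touching `F` at `X₀`.
-/

section RightLineDeriv

variable {E : Type*} [AddCommGroup E] [Module ℝ E]

/-- For convex `f` the quotients decrease as `t ↓ 0`, so this is the one-sided derivative of `f`
at `x` in direction `h`; without convexity the infimum may be a junk value. -/
def _root_.rightLineDeriv (f : E → ℝ) (x h : E) : ℝ :=
  ⨅ t : Ioi (0 : ℝ), (f (x + (t : ℝ) • h) - f x) / t

variable {f : E → ℝ}

lemma _root_.ConvexOn.comp_line (hf : ConvexOn ℝ univ f) (x h : E) :
    ConvexOn ℝ univ fun t : ℝ => f (x + t • h) := by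
  simpa [Function.comp_def] using
    (hf.translate_right x).comp_linearMap (LinearMap.toSpanSingleton ℝ E h)

lemma _root_.ConvexOn.slope_mono_of_pos (hf : ConvexOn ℝ univ f) (x h : E) {s t : ℝ} (hs : 0 < s)
    (hst : s ≤ t) : (f (x + s • h) - f x) / s ≤ (f (x + t • h) - f x) / t := by
  simpa using (hf.comp_line x h).secant_mono (a := 0) trivial trivial trivial hs.ne'
    (hs.trans_le hst).ne' hst

lemma _root_.ConvexOn.sub_le_slope (hf : ConvexOn ℝ univ f) (x h : E) {t : ℝ} (ht : 0 < t) :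
    f x - f (x - h) ≤ (f (x + t • h) - f x) / t := by
  have := (hf.comp_line x h).secant_mono (a := 0) (x := -1) trivial trivial trivial
    (by norm_num) ht.ne' (by linarith)
  simpa [← sub_eq_add_neg, div_neg] using this

lemma _root_.ConvexOn.bddBelow_slope (hf : ConvexOn ℝ univ f) (x h : E) :
    BddBelow (range fun t : Ioi (0 : ℝ) => (f (x + (t : ℝ) • h) - f x) / t) :=
  ⟨f x - f (x - h), by rintro _ ⟨t, rfl⟩; exact hf.sub_le_slope x h t.2⟩

lemma _root_.ConvexOn.rightLineDeriv_le_slope (hf : ConvexOn ℝ univ f) (x h : E) {t : ℝ}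
    (ht : 0 < t) : rightLineDeriv f x h ≤ (f (x + t • h) - f x) / t :=
  ciInf_le (hf.bddBelow_slope x h) ⟨t, ht⟩

lemma _root_.ConvexOn.le_rightLineDeriv_iff (hf : ConvexOn ℝ univ f) (x h : E) {c : ℝ} :
    c ≤ rightLineDeriv f x h ↔ ∀ t : ℝ, 0 < t → c ≤ (f (x + t • h) - f x) / t :=
  ⟨fun hc _ ht => hc.trans (hf.rightLineDeriv_le_slope x h ht),
    fun hc => le_ciInf fun t => hc t t.2⟩

lemma _root_.ConvexOn.rightLineDeriv_smul (hf : ConvexOn ℝ univ f) (x h : E) {c : ℝ} (hc : 0 < c) :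
    rightLineDeriv f x (c • h) = c * rightLineDeriv f x h := by
  have slope_smul : ∀ t : ℝ, (f (x + t • c • h) - f x) / t
      = c * ((f (x + (t * c) • h) - f x) / (t * c)) := fun t => by
    rw [mul_smul, smul_comm t c h]
    field_simp
  have hle : rightLineDeriv f x (c • h) / c ≤ rightLineDeriv f x h :=
    (hf.le_rightLineDeriv_iff x h).2 fun t ht => by
      rw [div_le_iff₀' hc]
      simpa [slope_smul, div_mul_cancel₀ _ hc.ne'] using
        hf.rightLineDeriv_le_slope x (c • h) (div_pos ht hc)
  have hge : c * rightLineDeriv f x h ≤ rightLineDeriv f x (c • h) :=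
    (hf.le_rightLineDeriv_iff x (c • h)).2 fun t ht => by
      rw [slope_smul]
      exact mul_le_mul_of_nonneg_left (hf.rightLineDeriv_le_slope x h (mul_pos ht hc)) hc.le
  rw [div_le_iff₀ hc] at hle
  linarith

lemma _root_.ConvexOn.rightLineDeriv_add_le (hf : ConvexOn ℝ univ f) (x h₁ h₂ : E) :
    rightLineDeriv f x (h₁ + h₂) ≤ rightLineDeriv f x h₁ + rightLineDeriv f x h₂ := by
  have key : ∀ t₁ t₂ : ℝ, 0 < t₁ → 0 < t₂ → rightLineDeriv f x (h₁ + h₂) ≤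
      (f (x + t₁ • h₁) - f x) / t₁ + (f (x + t₂ • h₂) - f x) / t₂ := by
    intro t₁ t₂ ht₁ ht₂
    set t := min t₁ t₂
    have ht : 0 < t := lt_min ht₁ ht₂
    have hmid : x + (t / 2) • (h₁ + h₂)
        = (1 / 2 : ℝ) • (x + t • h₁) + (1 / 2 : ℝ) • (x + t • h₂) := by
      match_scalars <;> ring
    have hconv := hf.2 (mem_univ (x + t • h₁)) (mem_univ (x + t • h₂))
      (by norm_num : (0 : ℝ) ≤ 1 / 2) (by norm_num : (0 : ℝ) ≤ 1 / 2) (by norm_num)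
    rw [← hmid, smul_eq_mul, smul_eq_mul] at hconv
    calc rightLineDeriv f x (h₁ + h₂) ≤ (f (x + (t / 2) • (h₁ + h₂)) - f x) / (t / 2) :=
          hf.rightLineDeriv_le_slope x _ (half_pos ht)
      _ ≤ (f (x + t • h₁) - f x) / t + (f (x + t • h₂) - f x) / t := by
          rw [← add_div, div_div_eq_mul_div, div_le_div_iff_of_pos_right ht]
          linarith
      _ ≤ _ := add_le_add (hf.slope_mono_of_pos x h₁ ht (min_le_left _ _))
          (hf.slope_mono_of_pos x h₂ ht (min_le_right _ _))
  have h₁_bound : ∀ t₂ : ℝ, 0 < t₂ → rightLineDeriv f x (h₁ + h₂)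
      - (f (x + t₂ • h₂) - f x) / t₂ ≤ rightLineDeriv f x h₁ := fun t₂ ht₂ =>
    (hf.le_rightLineDeriv_iff x h₁).2 fun t₁ ht₁ => by linarith [key t₁ t₂ ht₁ ht₂]
  have h₂_bound : rightLineDeriv f x (h₁ + h₂) - rightLineDeriv f x h₁
      ≤ rightLineDeriv f x h₂ :=
    (hf.le_rightLineDeriv_iff x h₂).2 fun t₂ ht₂ => by linarith [h₁_bound t₂ ht₂]
  linarith

lemma _root_.ConvexOn.exists_linear_le (hf : ConvexOn ℝ univ f) (x : E) :
    ∃ ℓ : E →ₗ[ℝ] ℝ, ∀ h, f x + ℓ h ≤ f (x + h) := by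
  obtain ⟨ℓ, -, hℓ⟩ := exists_extension_of_le_sublinear (LinearPMap.mk ⊥ 0)
    (rightLineDeriv f x) (fun c hc h => hf.rightLineDeriv_smul x h hc)
    (hf.rightLineDeriv_add_le x) (fun ⟨h, hh⟩ => by
      obtain rfl := (Submodule.mem_bot ℝ).1 hh
      simp [rightLineDeriv])
  refine ⟨ℓ, fun h => ?_⟩
  have := (hℓ h).trans (hf.rightLineDeriv_le_slope x h one_pos)
  simp only [one_smul, div_one] at this
  linarith

lemma _root_.ConcaveOn.exists_linear_ge (hf : ConcaveOn ℝ univ f) (x : E) :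
    ∃ ℓ : E →ₗ[ℝ] ℝ, ∀ h, f (x + h) ≤ f x + ℓ h := by
  obtain ⟨ℓ, hℓ⟩ := hf.neg.exists_linear_le x
  exact ⟨-ℓ, fun h => by simpa [neg_add_le_iff_le_add, add_comm] using hℓ h⟩

end RightLineDeriv

lemma _root_.sup_sub_le_abs_sub_of_le {α : Type*} [Lattice α] [AddCommGroup α]
    [IsOrderedAddMonoid α] {g u y : α} (hgu : g ≤ u) : |g ⊔ y - y| ≤ |u - y| := by
  rw [abs_of_nonneg (sub_nonneg.2 le_sup_right)]
  calc g ⊔ y - y ≤ u ⊔ y - y := sub_le_sub_right (sup_le_sup_right hgu y) y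
    _ = (u - y) ⊔ 0 := by rw [sup_sub, sub_self]
    _ ≤ |u - y| := sup_le (le_abs_self _) (abs_nonneg _)

lemma _root_.upperSemicontinuousAt_of_le_add_sub {α : Type*} [TopologicalSpace α] {f p : α → ℝ}
    {x₀ : α} (hp : ContinuousAt p x₀) (hle : ∀ x, f x ≤ f x₀ + (p x - p x₀)) :
    UpperSemicontinuousAt f x₀ := by
  have hg : ContinuousAt (fun x => f x₀ + (p x - p x₀)) x₀ :=
    continuousAt_const.add (hp.sub continuousAt_const)
  exact fun y hy => (hg.upperSemicontinuousAt y (by simpa using hy)).mono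
    fun x hx => (hle x).trans_lt hx

variable {μ : Measure Ω}

instance : IsOrderedAddMonoid (Ω →ₘ[μ] ℝ) where
  add_le_add_left a b hab c := by
    rw [← AEEqFun.coeFn_le] at hab ⊢
    filter_upwards [AEEqFun.coeFn_add a c, AEEqFun.coeFn_add b c, hab] with ω hac hbc h
    simpa [hac, hbc] using h

def KotheRepresentsNormDual (L : Set (Ω →ₘ[μ] ℝ)) (nrm : (Ω →ₘ[μ] ℝ) → ℝ) : Prop :=
  ∀ φ : (Ω →ₘ[μ] ℝ) → ℝ,
    (∀ f ∈ L, ∀ g ∈ L, φ (f + g) = φ f + φ g) →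
    (∀ (c : ℝ), ∀ f ∈ L, φ (c • f) = c * φ f) →
    (∃ C : ℝ, ∀ f ∈ L, |φ f| ≤ C * nrm f) →
    ∃ Z ∈ kdual L, ∀ f ∈ L, φ f = ip f Z

namespace IsAdmissible

variable {L : Set (Ω →ₘ[μ] ℝ)} {nrm : (Ω →ₘ[μ] ℝ) → ℝ}

def toSubmodule (hL : IsAdmissible L nrm) : Submodule ℝ (Ω →ₘ[μ] ℝ) where
  carrier := L
  add_mem' hf hg := hL.add_mem _ hf _ hg
  zero_mem' := hL.zero_mem
  smul_mem' c _ hf := hL.smul_mem c _ hf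

lemma nrm_zero (hL : IsAdmissible L nrm) : nrm 0 = 0 := by
  simpa using hL.banach.smul_eq 0 hL.zero_mem 0

lemma nrm_neg (hL : IsAdmissible L nrm) {f : Ω →ₘ[μ] ℝ} (hf : f ∈ L) : nrm (-f) = nrm f := by
  simpa using hL.banach.smul_eq f hf (-1)

lemma nrm_sum_le (hL : IsAdmissible L nrm) {ι : Type*} (s : Finset ι) {v : ι → Ω →ₘ[μ] ℝ}
    (hv : ∀ k, v k ∈ L) : nrm (∑ k ∈ s, v k) ≤ ∑ k ∈ s, nrm (v k) := by
  classical
  induction s using Finset.induction_on with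
  | empty => simp [hL.nrm_zero]
  | insert a s ha ih =>
    rw [Finset.sum_insert ha, Finset.sum_insert ha]
    exact (hL.banach.triangle _ (hv a) _ (hL.toSubmodule.sum_mem fun k _ => hv k)).trans
      (add_le_add_right ih _)

lemma le_of_tendsto (hL : IsAdmissible L nrm) {u : ℕ → Ω →ₘ[μ] ℝ} (hu : ∀ n, u n ∈ L)
    {Y : Ω →ₘ[μ] ℝ} (hY : Y ∈ L)
    (hconv : ∀ ε : ℝ, 0 < ε → ∃ N : ℕ, ∀ n ≥ N, nrm (u n - Y) < ε)
    {g : Ω →ₘ[μ] ℝ} (hg : g ∈ L) {n₀ : ℕ} (hle : ∀ n ≥ n₀, g ≤ u n) : g ≤ Y := by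
  have hmem : g ⊔ Y - Y ∈ L := hL.toSubmodule.sub_mem (hL.sup_mem _ hg _ hY) hY
  have hsmall : ∀ ε : ℝ, 0 < ε → nrm (g ⊔ Y - Y) < ε := fun ε hε => by
    obtain ⟨N, hN⟩ := hconv ε hε
    refine lt_of_le_of_lt ?_ (hN (max N n₀) (le_max_left _ _))
    exact hL.banach.solid _ hmem _ (hL.toSubmodule.sub_mem (hu _) hY)
      (sup_sub_le_abs_sub_of_le (hle _ (le_max_right _ _)))
  have hzero : nrm (g ⊔ Y - Y) = 0 :=
    le_antisymm (le_of_forall_pos_lt_add fun ε hε => by simpa using hsmall ε hε)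
      (hL.banach.nonneg _ hmem)
  rw [hL.banach.eq_zero_iff _ hmem, sub_eq_zero] at hzero
  exact sup_eq_right.1 hzero

lemma abs_mem (hL : IsAdmissible L nrm) {f : Ω →ₘ[μ] ℝ} (hf : f ∈ L) : |f| ∈ L :=
  hL.sup_mem _ hf _ (hL.toSubmodule.neg_mem hf)

lemma nrm_abs_le (hL : IsAdmissible L nrm) {f : Ω →ₘ[μ] ℝ} (hf : f ∈ L) : nrm |f| ≤ nrm f :=
  hL.banach.solid _ (hL.abs_mem hf) _ hf (abs_abs f).le

lemma nrm_partialSum_sub_le (hL : IsAdmissible L nrm) {v : ℕ → Ω →ₘ[μ] ℝ} (hv : ∀ n, v n ∈ L)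
    (hnrm : ∀ n, nrm (v n) ≤ (1 / 2) ^ n) {m n : ℕ} (hnm : n ≤ m) :
    nrm (∑ k ∈ Finset.range m, v k - ∑ k ∈ Finset.range n, v k) ≤ 2 * (1 / 2) ^ n := by
  rw [← Finset.sum_range_add_sum_Ico _ hnm, add_sub_cancel_left]
  calc nrm (∑ k ∈ Finset.Ico n m, v k) ≤ ∑ k ∈ Finset.Ico n m, (1 / 2 : ℝ) ^ k :=
        (hL.nrm_sum_le _ hv).trans (Finset.sum_le_sum fun k _ => hnrm k)
    _ ≤ (1 / 2) ^ n / (1 - 1 / 2) := geom_sum_Ico_le_of_lt_one (by norm_num) (by norm_num)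
    _ = 2 * (1 / 2) ^ n := by ring

lemma exists_forall_le_of_nrm_le_geometric (hL : IsAdmissible L nrm) {v : ℕ → Ω →ₘ[μ] ℝ}
    (hv : ∀ n, v n ∈ L) (hv₀ : ∀ n, 0 ≤ v n) (hnrm : ∀ n, nrm (v n) ≤ (1 / 2) ^ n) :
    ∃ Y ∈ L, ∀ n, v n ≤ Y := by
  set T : ℕ → Ω →ₘ[μ] ℝ := fun N => ∑ k ∈ Finset.range N, v k
  have hT : ∀ N, T N ∈ L := fun N => hL.toSubmodule.sum_mem fun k _ => hv k
  have hcauchy : ∀ ε : ℝ, 0 < ε → ∃ N : ℕ, ∀ m ≥ N, ∀ n ≥ N, nrm (T m - T n) < ε := by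
    intro ε hε
    obtain ⟨N, hN⟩ := exists_pow_lt_of_lt_one (half_pos hε) (by norm_num : (1 / 2 : ℝ) < 1)
    have htail : ∀ n ≥ N, 2 * (1 / 2 : ℝ) ^ n < ε := fun n hn => by
      linarith [pow_le_pow_of_le_one (by norm_num : (0 : ℝ) ≤ 1 / 2) (by norm_num) hn]
    refine ⟨N, fun m hm n hn => ?_⟩
    rcases le_total n m with hnm | hmn
    · exact (hL.nrm_partialSum_sub_le hv hnrm hnm).trans_lt (htail n hn)
    · rw [← neg_sub, hL.nrm_neg (hL.toSubmodule.sub_mem (hT n) (hT m))]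
      exact (hL.nrm_partialSum_sub_le hv hnrm hmn).trans_lt (htail m hm)
  obtain ⟨Y, hY, hconv⟩ := hL.banach.complete T hT hcauchy
  exact ⟨Y, hY, fun n => hL.le_of_tendsto hT hY hconv (hv n) (n₀ := n + 1) fun m hm =>
    Finset.single_le_sum (fun k _ => hv₀ k) (Finset.mem_range.2 hm)⟩

lemma abs_le_div_mul_nrm_of_ball (hL : IsAdmissible L nrm) (ψ : hL.toSubmodule →ₗ[ℝ] ℝ) {δ C : ℝ}
    (hδ : 0 < δ) (hψ : ∀ a : hL.toSubmodule, nrm a ≤ δ → -C ≤ ψ a) (a : hL.toSubmodule) :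
    |ψ a| ≤ C / δ * nrm a := by
  rcases (hL.banach.nonneg a a.2).eq_or_lt with h0 | hpos
  · obtain rfl : a = 0 := Subtype.ext ((hL.banach.eq_zero_iff a a.2).1 h0.symm)
    rw [map_zero, abs_zero, ← h0, mul_zero]
  · set c := δ / nrm a
    have hc : 0 < c := div_pos hδ hpos
    have hscaled : ∀ b : hL.toSubmodule, nrm b = nrm a → nrm (c • b : hL.toSubmodule) ≤ δ :=
      fun b hb => by
        rw [Submodule.coe_smul, hL.banach.smul_eq b b.2, abs_of_pos hc, hb,
          div_mul_cancel₀ _ hpos.ne']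
    have h₁ := hψ _ (hscaled a rfl)
    have h₂ := hψ _ (hscaled (-a) (hL.nrm_neg a.2))
    rw [map_smul, smul_eq_mul] at h₁
    rw [map_smul, map_neg, smul_eq_mul, mul_neg] at h₂
    have habs : |ψ a| * c ≤ C := by
      rw [← abs_of_pos hc, ← abs_mul, mul_comm]
      exact abs_le.2 ⟨h₁, by linarith⟩
    have hcδ : c * nrm a = δ := div_mul_cancel₀ _ hpos.ne'
    rwa [show C / δ * nrm a = C / c by rw [← hcδ]; field_simp, le_div_iff₀ hc]

lemma exists_kdual_ip_eq (hL : IsAdmissible L nrm) (hrepr : KotheRepresentsNormDual L nrm)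
    (ψ : hL.toSubmodule →ₗ[ℝ] ℝ) {δ C : ℝ} (hδ : 0 < δ)
    (hψ : ∀ a : hL.toSubmodule, nrm a ≤ δ → -C ≤ ψ a) :
    ∃ Z ∈ kdual L, ∀ a : hL.toSubmodule, ψ a = ip a Z := by
  classical
  set φ : (Ω →ₘ[μ] ℝ) → ℝ := fun f => if hf : f ∈ L then ψ ⟨f, hf⟩ else 0
  have hφ : ∀ a : hL.toSubmodule, φ a = ψ a := fun a => dif_pos a.2
  obtain ⟨Z, hZ, hφZ⟩ := hrepr φ
    (fun f hf g hg => by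
      rw [hφ ⟨f + g, hL.add_mem f hf g hg⟩, hφ ⟨f, hf⟩, hφ ⟨g, hg⟩, ← map_add]; rfl)
    (fun c f hf => by
      rw [hφ ⟨c • f, hL.smul_mem c f hf⟩, hφ ⟨f, hf⟩, ← smul_eq_mul, ← map_smul]; rfl)
    ⟨C / δ, fun f hf => (hφ ⟨f, hf⟩).symm ▸ hL.abs_le_div_mul_nrm_of_ball ψ hδ hψ ⟨f, hf⟩⟩
  exact ⟨Z, hZ, fun a => (hφ a).symm.trans (hφZ a a.2)⟩

end IsAdmissible

section Product

variable {Li : Fin d → Set (Ω →ₘ[μ] ℝ)} {nrmX : Fin d → (Ω →ₘ[μ] ℝ) → ℝ}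

def prodSubmodule (hLi : ∀ i, IsAdmissible (Li i) (nrmX i)) :
    Submodule ℝ (Fin d → Ω →ₘ[μ] ℝ) where
  carrier := prodSet Li
  add_mem' hX hY i := (hLi i).add_mem _ (hX i) _ (hY i)
  zero_mem' i := (hLi i).zero_mem
  smul_mem' c _ hX i := (hLi i).smul_mem c _ (hX i)

lemma exists_sub_le_of_monotoneOn (hLi : ∀ i, IsAdmissible (Li i) (nrmX i))
    {f : (Fin d → Ω →ₘ[μ] ℝ) → ℝ} (hf : MonotoneOn f (prodSet Li))
    {X₀ : Fin d → Ω →ₘ[μ] ℝ} (hX₀ : X₀ ∈ prodSet Li) :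
    ∃ δ > 0, ∃ C : ℝ, ∀ H ∈ prodSet Li, (∀ i, nrmX i (H i) ≤ δ) → f X₀ - C ≤ f (X₀ + H) := by
  by_contra! hcon
  choose H hH hHnrm hHlt using fun n : ℕ => hcon ((1 / 2) ^ n) (by positivity) n
  choose Y hY hHY using fun i => (hLi i).exists_forall_le_of_nrm_le_geometric
    (fun n => (hLi i).abs_mem (hH n i)) (fun n => abs_nonneg (H n i))
    (fun n => ((hLi i).nrm_abs_le (hH n i)).trans (hHnrm n i))
  have hlow : X₀ - Y ∈ prodSet Li := (prodSubmodule hLi).sub_mem hX₀ hY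
  obtain ⟨n, hn⟩ := exists_nat_gt (f X₀ - f (X₀ - Y))
  have hle : X₀ - Y ≤ X₀ + H n := fun i => by
    rw [Pi.sub_apply, Pi.add_apply, sub_eq_add_neg]
    exact add_le_add_right (neg_le.1 ((neg_le_abs (H n i)).trans (hHY i n))) (X₀ i)
  linarith [hf hlow ((prodSubmodule hLi).add_mem hX₀ (hH n)) hle, hHlt n]

def singleₗ (hLi : ∀ i, IsAdmissible (Li i) (nrmX i)) (i : Fin d) :
    (hLi i).toSubmodule →ₗ[ℝ] prodSubmodule hLi :=
  LinearMap.codRestrict _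
    (LinearMap.single ℝ (fun _ => Ω →ₘ[μ] ℝ) i ∘ₗ (hLi i).toSubmodule.subtype) fun a j => by
      by_cases hji : j = i
      · subst hji
        simp only [LinearMap.coe_comp, Function.comp_apply, Submodule.subtype_apply,
          LinearMap.coe_single, Pi.single_eq_same]
        exact a.2
      · simpa [Pi.single_apply, hji] using (hLi j).zero_mem

@[simp]
lemma coe_singleₗ (hLi : ∀ i, IsAdmissible (Li i) (nrmX i)) (i : Fin d)
    (a : (hLi i).toSubmodule) :
    (singleₗ hLi i a : Fin d → Ω →ₘ[μ] ℝ) = Pi.single i (a : Ω →ₘ[μ] ℝ) :=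
  rfl

lemma exists_prodSet_kdual_pairing_eq (hLi : ∀ i, IsAdmissible (Li i) (nrmX i))
    (hrepr : ∀ i, KotheRepresentsNormDual (Li i) (nrmX i))
    (ℓ : prodSubmodule hLi →ₗ[ℝ] ℝ) {δ C : ℝ} (hδ : 0 < δ)
    (hℓ : ∀ H : prodSubmodule hLi, (∀ i, nrmX i ((H : Fin d → Ω →ₘ[μ] ℝ) i) ≤ δ) → -C ≤ ℓ H) :
    ∃ Z ∈ prodSet fun i => kdual (Li i), ∀ H : prodSubmodule hLi, ℓ H = pairing H Z := by
  have hsingle : ∀ i (a : (hLi i).toSubmodule), nrmX i a ≤ δ → -C ≤ ℓ (singleₗ hLi i a) :=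
    fun i a ha => hℓ _ fun j => by
      by_cases hji : j = i
      · subst hji
        simpa using ha
      · simpa [Pi.single_apply, hji, (hLi j).nrm_zero] using hδ.le
  choose Z hZ hψZ using fun i => (hLi i).exists_kdual_ip_eq (hrepr i) (ℓ ∘ₗ singleₗ hLi i) hδ
    (hsingle i)
  refine ⟨Z, hZ, fun H => ?_⟩
  have hsum : H = ∑ i, singleₗ hLi i ⟨H.1 i, H.2 i⟩ :=
    Subtype.ext (by simpa using (Finset.univ_sum_single H.1).symm)
  conv_lhs => rw [hsum, map_sum]
  exact Finset.sum_congr rfl fun i _ => hψZ i _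

end Product

section Pairing

lemma ip_add_left {U V W : Ω →ₘ[μ] ℝ} (hU : Integrable (fun ω => U ω * W ω) μ)
    (hV : Integrable (fun ω => V ω * W ω) μ) : ip (U + V) W = ip U W + ip V W := by
  rw [ip, ip, ip, ← integral_add hU hV]
  refine integral_congr_ae ?_
  filter_upwards [AEEqFun.coeFn_add U V] with ω h
  simp [h, add_mul]

lemma ip_sub_left {U V W : Ω →ₘ[μ] ℝ} (hU : Integrable (fun ω => U ω * W ω) μ)
    (hV : Integrable (fun ω => V ω * W ω) μ) : ip (U - V) W = ip U W - ip V W := by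
  rw [ip, ip, ip, ← integral_sub hU hV]
  refine integral_congr_ae ?_
  filter_upwards [AEEqFun.coeFn_sub U V] with ω h
  simp [h, sub_mul]

lemma ip_smul_left (c : ℝ) (U W : Ω →ₘ[μ] ℝ) : ip (c • U) W = c * ip U W := by
  rw [ip, ip, ← integral_const_mul]
  refine integral_congr_ae ?_
  filter_upwards [AEEqFun.coeFn_smul c U] with ω h
  simp [h, mul_assoc]

lemma ip_mono_left {U V W : Ω →ₘ[μ] ℝ} (hU : Integrable (fun ω => U ω * W ω) μ)
    (hV : Integrable (fun ω => V ω * W ω) μ) (hUV : U ≤ V) (hW : 0 ≤ W) : ip U W ≤ ip V W := by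
  refine integral_mono_ae hU hV ?_
  filter_upwards [AEEqFun.coeFn_le.2 hUV, AEEqFun.coeFn_le.2 hW, AEEqFun.coeFn_zero (β := ℝ)]
    with ω hUV hW h0
  exact mul_le_mul_of_nonneg_right hUV (by simpa [h0] using hW)

lemma pairing_sub_left {Li : Fin d → Set (Ω →ₘ[μ] ℝ)} {X Y Z : Fin d → Ω →ₘ[μ] ℝ}
    (hX : X ∈ prodSet Li) (hY : Y ∈ prodSet Li) (hZ : Z ∈ prodSet fun i => kdual (Li i)) :
    pairing (X - Y) Z = pairing X Z - pairing Y Z := by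
  rw [pairing, pairing, pairing, ← Finset.sum_sub_distrib]
  exact Finset.sum_congr rfl fun i _ => ip_sub_left (hZ i _ (hX i)) (hZ i _ (hY i))

lemma continuous_pairing_wtop {P D : Set (Fin d → Ω →ₘ[μ] ℝ)} {Z : Fin d → Ω →ₘ[μ] ℝ}
    (hZ : Z ∈ D) : @Continuous P ℝ (wtop P D) _ fun X => pairing (X : Fin d → Ω →ₘ[μ] ℝ) Z := by
  let _ := wtop P D
  have hpair : Continuous fun (X : P) (Z' : D) =>
      pairing (X : Fin d → Ω →ₘ[μ] ℝ) (Z' : Fin d → Ω →ₘ[μ] ℝ) :=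
    continuous_induced_dom
  exact (continuous_apply ⟨Z, hZ⟩).comp hpair

end Pairing

section ExpectedImpact

variable {V : Type*} {P : Set V} {EE : Set (Ω →ₘ[μ] ℝ)} {S : V → Ω →ₘ[μ] ℝ} {W : Ω →ₘ[μ] ℝ}

lemma monotoneOn_ip_comp [Preorder V] (hmap : ∀ X ∈ P, S X ∈ EE) (hmono : MonotoneOn S P)
    (hW : W ∈ kdual EE) (hW₀ : 0 ≤ W) : MonotoneOn (fun X => ip (S X) W) P :=
  fun _ hX _ hY hXY => ip_mono_left (hW _ (hmap _ hX)) (hW _ (hmap _ hY)) (hmono hX hY hXY) hW₀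

lemma concaveOn_ip_comp [AddCommGroup V] [Module ℝ V] {nrmE : (Ω →ₘ[μ] ℝ) → ℝ}
    (hE : IsAdmissible EE nrmE) (hP : Convex ℝ P) (hmap : ∀ X ∈ P, S X ∈ EE)
    (hconc : ∀ X ∈ P, ∀ Y ∈ P, ∀ t : ℝ, 0 ≤ t → t ≤ 1 →
      t • S X + (1 - t) • S Y ≤ S (t • X + (1 - t) • Y))
    (hW : W ∈ kdual EE) (hW₀ : 0 ≤ W) : ConcaveOn ℝ P fun X => ip (S X) W := by
  refine ⟨hP, fun X hX Y hY a b ha hb hab => ?_⟩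
  obtain rfl : b = 1 - a := eq_sub_of_add_eq' hab
  have hsX : a • S X ∈ EE := hE.smul_mem _ _ (hmap X hX)
  have hsY : (1 - a) • S Y ∈ EE := hE.smul_mem _ _ (hmap Y hY)
  calc a • ip (S X) W + (1 - a) • ip (S Y) W = ip (a • S X + (1 - a) • S Y) W := by
        rw [ip_add_left (hW _ hsX) (hW _ hsY), ip_smul_left, ip_smul_left, smul_eq_mul,
          smul_eq_mul]
    _ ≤ ip (S (a • X + (1 - a) • Y)) W :=
        ip_mono_left (hW _ (hE.add_mem _ hsX _ hsY)) (hW _ (hmap _ (hP hX hY ha hb hab)))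
          (hconc X hX Y hY a ha (by linarith)) hW₀

end ExpectedImpact

theorem statement0_general {μ : Measure Ω} {d : ℕ}
    (Li : Fin d → Set (Ω →ₘ[μ] ℝ)) (nrmX : Fin d → ((Ω →ₘ[μ] ℝ) → ℝ))
    (EE : Set (Ω →ₘ[μ] ℝ)) (nrmE : (Ω →ₘ[μ] ℝ) → ℝ)
    (hLi : ∀ i, IsAdmissible (Li i) (nrmX i))
    (hE : IsAdmissible EE nrmE)
    -- every norm-continuous linear functional on `X_i` is represented by an element of `X'_i`
    (hdual_repr : ∀ i, ∀ φ : (Ω →ₘ[μ] ℝ) → ℝ,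
      (∀ f ∈ Li i, ∀ g ∈ Li i, φ (f + g) = φ f + φ g) →
      (∀ (c : ℝ), ∀ f ∈ Li i, φ (c • f) = c * φ f) →
      (∃ C : ℝ, ∀ f ∈ Li i, |φ f| ≤ C * nrmX i f) →
      ∃ Z ∈ kdual (Li i), ∀ f ∈ Li i, φ f = ip f Z)
    (S : (Fin d → (Ω →ₘ[μ] ℝ)) → (Ω →ₘ[μ] ℝ))
    (hmap : ∀ X ∈ prodSet Li, S X ∈ EE)
    (hmono : ∀ X ∈ prodSet Li, ∀ Y ∈ prodSet Li, X ≤ Y → S X ≤ S Y)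
    (hconc : ∀ X ∈ prodSet Li, ∀ Y ∈ prodSet Li, ∀ t : ℝ, 0 ≤ t → t ≤ 1 →
      t • S X + (1 - t) • S Y ≤ S (t • X + (1 - t) • Y)) :
    ∀ W ∈ kdual EE, (0 : Ω →ₘ[μ] ℝ) ≤ W →
      @UpperSemicontinuous (↥(prodSet Li)) ℝ (wtop (prodSet Li) (prodSet fun i => kdual (Li i))) _
        (fun X : ↥(prodSet Li) => ∫ ω, S (X : Fin d → (Ω →ₘ[μ] ℝ)) ω * W ω ∂μ) := by
  intro W hW hW₀ X₀
  let _ := wtop (prodSet Li) (prodSet fun i => kdual (Li i))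
  let F : (Fin d → Ω →ₘ[μ] ℝ) → ℝ := fun X => ip (S X) W
  let V := prodSubmodule hLi
  obtain ⟨δ, hδ, C, hC⟩ :=
    exists_sub_le_of_monotoneOn hLi (monotoneOn_ip_comp hmap hmono hW hW₀) X₀.2
  have hFconc : ConcaveOn ℝ univ fun H : V => F H :=
    ((concaveOn_ip_comp hE V.convex hmap hconc hW hW₀).comp_linearMap V.subtype).subset
      (fun H _ => H.2) convex_univ
  obtain ⟨ℓ, hℓ⟩ := hFconc.exists_linear_ge ⟨X₀, X₀.2⟩
  obtain ⟨Z, hZ, hℓZ⟩ := exists_prodSet_kdual_pairing_eq hLi hdual_repr ℓ hδ (C := C)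
    fun H hH => by
      have hsup : F (X₀ + H) ≤ F X₀ + ℓ H := hℓ H
      linarith [hC H H.2 hH]
  refine upperSemicontinuousAt_of_le_add_sub (continuous_pairing_wtop hZ).continuousAt
    fun X => ?_
  have hsup : F (X₀ + (X - X₀)) ≤ F X₀ + ℓ ⟨X - X₀, V.sub_mem X.2 X₀.2⟩ := hℓ ⟨_, _⟩
  rwa [hℓZ, pairing_sub_left X.2 X₀.2 hZ, add_sub_cancel] at hsup

/-- if every Köthe dual `X'_i` coincides with the norm dual of `X_i`, then for
any monotone concave `S : X → E` and every `W ∈ E'_+` the functional `X ↦ E[S(X)W]` is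
`σ(X,X')`-upper semicontinuous. -/
theorem statement0 {μ : Measure Ω} [IsProbabilityMeasure μ] {d : ℕ}
    (Li : Fin d → Set (Ω →ₘ[μ] ℝ)) (nrmX : Fin d → ((Ω →ₘ[μ] ℝ) → ℝ))
    (EE : Set (Ω →ₘ[μ] ℝ)) (nrmE : (Ω →ₘ[μ] ℝ) → ℝ)
    (hLi : ∀ i, IsAdmissible (Li i) (nrmX i))
    (hE : IsAdmissible EE nrmE)
    -- every norm-continuous linear functional on `X_i` is represented by an element of `X'_i`
    (hdual_repr : ∀ i, ∀ φ : (Ω →ₘ[μ] ℝ) → ℝ,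
      (∀ f ∈ Li i, ∀ g ∈ Li i, φ (f + g) = φ f + φ g) →
      (∀ (c : ℝ), ∀ f ∈ Li i, φ (c • f) = c * φ f) →
      (∃ C : ℝ, ∀ f ∈ Li i, |φ f| ≤ C * nrmX i f) →
      ∃ Z ∈ kdual (Li i), ∀ f ∈ Li i, φ f = ip f Z)
    -- conversely, every element of `X'_i` induces a norm-continuous linear functional on `X_i`
    (hdual_cont : ∀ i, ∀ Z ∈ kdual (Li i), ∃ C : ℝ, ∀ f ∈ Li i, |ip f Z| ≤ C * nrmX i f)
    (S : (Fin d → (Ω →ₘ[μ] ℝ)) → (Ω →ₘ[μ] ℝ))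
    (hmap : ∀ X ∈ prodSet Li, S X ∈ EE)
    (hmono : ∀ X ∈ prodSet Li, ∀ Y ∈ prodSet Li, X ≤ Y → S X ≤ S Y)
    (hconc : ∀ X ∈ prodSet Li, ∀ Y ∈ prodSet Li, ∀ t : ℝ, 0 ≤ t → t ≤ 1 →
      t • S X + (1 - t) • S Y ≤ S (t • X + (1 - t) • Y)) :
    ∀ W ∈ kdual EE, (0 : Ω →ₘ[μ] ℝ) ≤ W →
      @UpperSemicontinuous (↥(prodSet Li)) ℝ (wtop (prodSet Li) (prodSet fun i => kdual (Li i))) _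
        (fun X : ↥(prodSet Li) => ∫ ω, S (X : Fin d → (Ω →ₘ[μ] ℝ)) ω * W ω ∂μ) :=
  statement0_general Li nrmX EE nrmE hLi hE hdual_repr S hmap hmono hconc
end SystemicRisk
end
end

section
/- Let S : X → E be an admissible impact map and A ⊂ E an admissible acceptance set, and assume X_i = E for every i ∈ {1,…,d}. Suppose that bar(A) ∩ E'_{++} ≠ ∅ and that there exist a ∈ (0,∞) and b ∈ ℝ such that S(X) ≤ a·Σ_{i=1}^d X_i + b almost surely for every X ∈ X. Then bar(S^{-1}(A)) ∩ C ∩ X'_{++} ≠ ∅. -/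
open MeasureTheory Filter Set
open scoped ENNReal

noncomputable section

namespace SystemicRisk

variable {Ω : Type*} [MeasurableSpace Ω]

variable {d : ℕ}

/-! A strictly positive `W ∈ bar(A)` yields the candidate `Z = (W / E[W], …, W / E[W])`, which lies
in `C ∩ X'₊₊` because `X_i = E`. For `X ∈ S⁻¹(A)` the growth bound gives
`σ_A(W) ≤ E[S(X) W] ≤ a E[W] E[⟨X, Z⟩] + b E[W]`, so `E[⟨X, Z⟩]` is bounded below on `S⁻¹(A)`. -/

theorem _root_.EReal.bot_lt_iInf₂_coe_iff {α : Type*} {s : Set α} {f : α → ℝ} :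
    ⊥ < ⨅ x ∈ s, (f x : EReal) ↔ ∃ r : ℝ, ∀ x ∈ s, r ≤ f x := by
  constructor
  · intro h
    obtain ⟨r, -, hr⟩ := EReal.exists_between_coe_real h
    exact ⟨r, fun x hx => EReal.coe_le_coe_iff.1 (hr.le.trans (iInf₂_le x hx))⟩
  · rintro ⟨r, hr⟩
    exact (EReal.bot_lt_coe r).trans_le (le_iInf₂ fun x hx => EReal.coe_le_coe_iff.2 (hr x hx))

variable {μ : Measure Ω}

theorem mem_barrS_iff {A D : Set (Ω →ₘ[μ] ℝ)} {W : Ω →ₘ[μ] ℝ} :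
    W ∈ barrS A D ↔ W ∈ D ∧ ∃ r : ℝ, ∀ U ∈ A, r ≤ ip U W :=
  and_congr_right' EReal.bot_lt_iInf₂_coe_iff

theorem mem_barrV_iff {B D : Set (Fin d → (Ω →ₘ[μ] ℝ))} {Z : Fin d → (Ω →ₘ[μ] ℝ)} :
    Z ∈ barrV B D ↔ Z ∈ D ∧ ∃ r : ℝ, ∀ X ∈ B, r ≤ pairing X Z :=
  and_congr_right' EReal.bot_lt_iInf₂_coe_iff

theorem IsAdmissible.one_mem {L : Set (Ω →ₘ[μ] ℝ)} {nrm : (Ω →ₘ[μ] ℝ) → ℝ}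
    (hL : IsAdmissible L nrm) : (1 : Ω →ₘ[μ] ℝ) ∈ L :=
  hL.linfty_subset 1 ⟨1, by filter_upwards [AEEqFun.coeFn_one (β := ℝ) (μ := μ)] with ω h; simp [h]⟩

theorem integrable_of_mem_kdual {L : Set (Ω →ₘ[μ] ℝ)} {W : Ω →ₘ[μ] ℝ} (h1 : 1 ∈ L)
    (hW : W ∈ kdual L) : Integrable W μ :=
  (hW 1 h1).congr <| by filter_upwards [AEEqFun.coeFn_one (β := ℝ) (μ := μ)] with ω h; simp [h]

theorem smul_mem_kdual {L : Set (Ω →ₘ[μ] ℝ)} {W : Ω →ₘ[μ] ℝ} (c : ℝ) (hW : W ∈ kdual L) :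
    c • W ∈ kdual L := fun f hf =>
  ((hW f hf).const_mul c).congr <| by
    filter_upwards [AEEqFun.coeFn_smul c W] with ω h; simp only [h, Pi.smul_apply, smul_eq_mul]; ring

theorem integral_pos_of_mem_strictPos [NeZero μ] {W : Ω →ₘ[μ] ℝ} (hW : W ∈ strictPos μ)
    (hWi : Integrable W μ) : 0 < ∫ ω, W ω ∂μ := by
  have hW' : ∀ᵐ ω ∂μ, 0 < W ω := hW
  rw [integral_pos_iff_support_of_nonneg_ae (hW'.mono fun _ h => h.le) hWi]
  refine pos_iff_ne_zero.2 fun h0 => ?_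
  obtain ⟨ω, hpos, hzero⟩ := (hW'.and (measure_eq_zero_iff_ae_notMem.1 h0)).exists
  exact hzero (Function.mem_support.2 hpos.ne')

theorem ip_smul_right (U W : Ω →ₘ[μ] ℝ) (c : ℝ) : ip U (c • W) = c * ip U W := by
  rw [ip, ip, ← integral_const_mul]
  refine integral_congr_ae ?_
  filter_upwards [AEEqFun.coeFn_smul c W] with ω h
  simp only [h, Pi.smul_apply, smul_eq_mul]; ring

theorem pairing_const_smul_right (X : Fin d → (Ω →ₘ[μ] ℝ)) (W : Ω →ₘ[μ] ℝ) (c : ℝ) :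
    pairing X (fun _ => c • W) = c * ∑ i, ip (X i) W := by
  simp only [pairing, ip_smul_right, Finset.mul_sum]

theorem ip_le_of_le_smul_sum_add_const {ι : Type*} [Fintype ι] {U W : Ω →ₘ[μ] ℝ}
    {X : ι → Ω →ₘ[μ] ℝ} {a b : ℝ}
    (hle : U ≤ a • ∑ i, X i + AEEqFun.const Ω b) (hW : 0 ≤ᵐ[μ] W)
    (hUW : Integrable (fun ω => U ω * W ω) μ) (hXW : ∀ i, Integrable (fun ω => X i ω * W ω) μ)
    (hWi : Integrable W μ) :
    ip U W ≤ a * ∑ i, ip (X i) W + b * ∫ ω, W ω ∂μ := by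
  have hpt : ∀ᵐ ω ∂μ, U ω * W ω ≤ a * ∑ i, X i ω * W ω + b * W ω := by
    filter_upwards [AEEqFun.coeFn_le.2 hle, hW, AEEqFun.coeFn_add (a • ∑ i, X i) (AEEqFun.const Ω b),
      AEEqFun.coeFn_smul a (∑ i, X i), AEEqFun.coeFn_fun_finsetSum Finset.univ X,
      AEEqFun.coeFn_const (μ := μ) Ω b] with ω hU hWω hadd hsmul hsum hconst
    simp only [hadd, hsmul, hsum, hconst, Pi.add_apply, Pi.smul_apply, smul_eq_mul] at hU
    calc U ω * W ω ≤ (a * ∑ i, X i ω + b) * W ω := mul_le_mul_of_nonneg_right hU hWω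
      _ = _ := by rw [add_mul, mul_assoc, Finset.sum_mul]
  have hsumi : Integrable (fun ω => ∑ i, X i ω * W ω) μ := integrable_finsetSum _ fun i _ => hXW i
  calc ip U W ≤ ∫ ω, a * ∑ i, X i ω * W ω + b * W ω ∂μ :=
        integral_mono_ae hUW ((hsumi.const_mul a).add (hWi.const_mul b)) hpt
    _ = _ := by
      rw [integral_add (hsumi.const_mul a) (hWi.const_mul b), integral_const_mul,
        integral_const_mul, integral_finsetSum _ fun i _ => hXW i]
      rfl

theorem normalize_mem_Cset_inter_strictPosV [NeZero μ] {D : Set (Fin d → (Ω →ₘ[μ] ℝ))}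
    {W : Ω →ₘ[μ] ℝ} (hW : W ∈ strictPos μ) (hWi : Integrable W μ)
    (hD : (fun _ => (∫ ω, W ω ∂μ)⁻¹ • W) ∈ D) :
    (fun _ => (∫ ω, W ω ∂μ)⁻¹ • W) ∈ Cset D ∩ strictPosV μ d := by
  have hc := integral_pos_of_mem_strictPos hW hWi
  set c := ∫ ω, W ω ∂μ
  have hW' : ∀ᵐ ω ∂μ, 0 < W ω := hW
  have hcoe : ⇑(c⁻¹ • W) =ᵐ[μ] fun ω => c⁻¹ * W ω := by
    filter_upwards [AEEqFun.coeFn_smul c⁻¹ W] with ω h using h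
  refine ⟨⟨hD, fun _ => AEEqFun.coeFn_le.1 ?_, fun _ => ?_⟩, fun _ => ?_⟩
  · filter_upwards [hcoe, AEEqFun.coeFn_zero (β := ℝ) (μ := μ), hW'] with ω h h0 hpos
    rw [h, h0]
    exact mul_nonneg (inv_nonneg.2 hc.le) hpos.le
  · rw [integral_congr_ae hcoe, integral_const_mul, inv_mul_cancel₀ hc.ne']
  · filter_upwards [hcoe, hW'] with ω h hpos
    rw [h]
    exact mul_pos (inv_pos.2 hc) hpos

theorem statement6_general {μ : Measure Ω} [IsProbabilityMeasure μ] {d : ℕ}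
    (Li : Fin d → Set (Ω →ₘ[μ] ℝ))
    (EE : Set (Ω →ₘ[μ] ℝ)) (nrmE : (Ω →ₘ[μ] ℝ) → ℝ)
    (S : (Fin d → (Ω →ₘ[μ] ℝ)) → (Ω →ₘ[μ] ℝ)) (A : Set (Ω →ₘ[μ] ℝ))
    (hE : IsAdmissible EE nrmE)
    (hS : IsAdmissibleImpact (prodSet Li) (prodSet fun i => kdual (Li i)) EE (kdual EE) S)
    -- `X_i = E` for every `i`
    (hXiE : ∀ i, Li i = EE)
    -- `bar(A) ∩ E'₊₊ ≠ ∅`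
    (hbar : (barrS A (kdual EE) ∩ strictPos μ).Nonempty)
    -- `S(X) ≤ a ∑ᵢ Xᵢ + b`
    (hgrowth : ∃ a : ℝ, 0 < a ∧ ∃ b : ℝ, ∀ X ∈ prodSet Li,
        S X ≤ a • (∑ i, X i) + (AEEqFun.const Ω b : Ω →ₘ[μ] ℝ)) :
    (barrV (sysAcc (prodSet Li) S A) (prodSet fun i => kdual (Li i)) ∩
      Cset (prodSet fun i => kdual (Li i)) ∩ strictPosV μ d).Nonempty := by
  obtain ⟨W, hWbar, hWpos⟩ := hbar
  obtain ⟨hWdual, s, hs⟩ := mem_barrS_iff.1 hWbar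
  obtain ⟨a, ha, b, hgrowth⟩ := hgrowth
  have hWi : Integrable W μ := integrable_of_mem_kdual hE.one_mem hWdual
  have hc : 0 < ∫ ω, W ω ∂μ := integral_pos_of_mem_strictPos hWpos hWi
  set c := ∫ ω, W ω ∂μ
  have hZdual : (fun _ => c⁻¹ • W) ∈ prodSet fun i => kdual (Li i) := fun i => by
    simpa only [hXiE i] using smul_mem_kdual c⁻¹ hWdual
  obtain ⟨hZC, hZpos⟩ := normalize_mem_Cset_inter_strictPosV hWpos hWi hZdual
  refine ⟨_, ⟨mem_barrV_iff.2 ⟨hZdual, (s - b * c) / (a * c), ?_⟩, hZC⟩, hZpos⟩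
  rintro X ⟨hX, hSX⟩
  have hbound : s ≤ a * ∑ i, ip (X i) W + b * c :=
    (hs _ hSX).trans <| ip_le_of_le_smul_sum_add_const (hgrowth X hX)
      ((show ∀ᵐ ω ∂μ, 0 < W ω from hWpos).mono fun _ h => h.le)
      (hWdual _ (hS.mapsTo X hX)) (fun i => hWdual _ (hXiE i ▸ hX i)) hWi
  rw [pairing_const_smul_right, div_le_iff₀ (mul_pos ha hc)]
  have hcancel : c⁻¹ * (∑ i, ip (X i) W) * (a * c) = a * ∑ i, ip (X i) W := by
    field_simp
  linarith

/-- a sufficient condition for `bar(S⁻¹(A)) ∩ C ∩ X'₊₊ ≠ ∅`. -/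
theorem statement6 {μ : Measure Ω} [IsProbabilityMeasure μ] {d : ℕ}
    (Li : Fin d → Set (Ω →ₘ[μ] ℝ)) (nrmX : Fin d → ((Ω →ₘ[μ] ℝ) → ℝ))
    (EE : Set (Ω →ₘ[μ] ℝ)) (nrmE : (Ω →ₘ[μ] ℝ) → ℝ)
    (S : (Fin d → (Ω →ₘ[μ] ℝ)) → (Ω →ₘ[μ] ℝ)) (A : Set (Ω →ₘ[μ] ℝ))
    (hLi : ∀ i, IsAdmissible (Li i) (nrmX i))
    (hE : IsAdmissible EE nrmE)
    (hS : IsAdmissibleImpact (prodSet Li) (prodSet fun i => kdual (Li i)) EE (kdual EE) S)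
    (hA : IsAdmissibleAcceptance (prodSet Li) EE (kdual EE) S A)
    -- `X_i = E` for every `i`
    (hXiE : ∀ i, Li i = EE)
    -- `bar(A) ∩ E'₊₊ ≠ ∅`
    (hbar : (barrS A (kdual EE) ∩ strictPos μ).Nonempty)
    -- `S(X) ≤ a ∑ᵢ Xᵢ + b`
    (hgrowth : ∃ a : ℝ, 0 < a ∧ ∃ b : ℝ, ∀ X ∈ prodSet Li,
        S X ≤ a • (∑ i, X i) + (AEEqFun.const Ω b : Ω →ₘ[μ] ℝ)) :
    (barrV (sysAcc (prodSet Li) S A) (prodSet fun i => kdual (Li i)) ∩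
      Cset (prodSet fun i => kdual (Li i)) ∩ strictPosV μ d).Nonempty :=
  statement6_general Li EE nrmE S A hE hS hXiE hbar hgrowth

end SystemicRisk
end
end
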